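/- arXiv:1602.08784 — 2 statements merged into one kernel-verified Lean document; each statement's English description precedes it below -/
import Mathlib

section
/- For all 0 < ε', η, σ < 1 there exists δ > 0 such that for every α > 0 there exists γ > 0 such that the following holds. Let Γ = (V, E_Γ) be an n-vertex (p,β)-jumbled 3-uniform hypergraph with 0 < p ≤ 1, αp ≤ q ≤ p, and β ≤ γ p n^{3/2}. Let G be a spanning subhypergraph of Γ satisfying Q'(η,δ,q). Then every pair (X,Y) with X, Y ⊆ V and |X|, |Y| ≥ σn satisfies DISC(q,p,ε') in G. -/
open Finset
open scoped Classical

/-- The pairs (2-element subsets) of a finite vertex set `X`. -/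
def pairsOf {V : Type*} [DecidableEq V] (X : Finset V) : Finset (Finset V) :=
  X.powersetCard 2

/-- Incidence count between a set `X` of pairs and a set `Y` of vertices:
the number of pairs `(S, y)` with `S ∈ X`, `y ∈ Y` and `S ∪ {y}` an edge. -/
def eHG {V : Type*} [DecidableEq V] (E : Finset (Finset V)) (X : Finset (Finset V))
    (Y : Finset V) : ℕ :=
  ((X ×ˢ Y).filter (fun z => insert z.2 z.1 ∈ E)).card

/-- The neighbourhood of a pair `S` inside a vertex set `W`. -/
def nbhd {V : Type*} [DecidableEq V] (E : Finset (Finset V)) (S : Finset V)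
    (W : Finset V) : Finset V :=
  W.filter (fun w => insert w S ∈ E)

/-- `E` is a `3`-uniform hypergraph. -/
def Uniform3 {V : Type*} (E : Finset (Finset V)) : Prop := ∀ e ∈ E, e.card = 3

/-- `(p, β)`-jumbledness for a `3`-uniform hypergraph. -/
def Jumbled {V : Type*} [DecidableEq V] (E : Finset (Finset V)) (p β : ℝ) : Prop :=
  ∀ X : Finset (Finset V), (∀ S ∈ X, S.card = 2) → ∀ Y : Finset V,
    |(eHG E X Y : ℝ) - p * X.card * Y.card| ≤ β * Real.sqrt (X.card * Y.card)

/-- Property `Q'(η, δ, q)` for a 3-uniform hypergraph on the vertex type `V`. -/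
def PropQ' {V : Type*} [Fintype V] [DecidableEq V] (E : Finset (Finset V))
    (η δ q : ℝ) : Prop :=
  ∀ X : Finset (Finset V), (∀ S ∈ X, S.card = 2) → ∀ Y : Finset V,
    η * ((Fintype.card V).choose 2 : ℝ) ≤ X.card → η * (Fintype.card V : ℝ) ≤ Y.card →
    (1 - δ) * q * X.card * Y.card ≤ (eHG E X Y : ℝ) ∧
      (eHG E X Y : ℝ) ≤ (1 + δ) * q * X.card * Y.card

/-- The pair `(X, Y)` of vertex sets satisfies `DISC(q, p, ε)` in the
3-uniform hypergraph with edge set `E`. -/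
def DiscH {V : Type*} [DecidableEq V] (E : Finset (Finset V)) (X Y : Finset V)
    (q p ε : ℝ) : Prop :=
  ∀ X' ⊆ pairsOf X, ∀ Y' ⊆ Y,
    |(eHG E X' Y' : ℝ) - q * X'.card * Y'.card| ≤ ε * p * (X.card.choose 2 : ℝ) * Y.card

/-- The pair `(X, Y)` of vertex sets satisfies `PAIR(q, p, δ)` in the
3-uniform hypergraph with edge set `E`. -/
def PairP {V : Type*} [DecidableEq V] (E : Finset (Finset V)) (X Y : Finset V)
    (q p δ : ℝ) : Prop :=
  (∑ S₁ ∈ pairsOf X, |((nbhd E S₁ Y).card : ℝ) - q * Y.card|)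
      ≤ δ * p * (X.card.choose 2 : ℝ) * Y.card ∧
  (∑ S₁ ∈ pairsOf X, ∑ S₂ ∈ pairsOf X,
      |((nbhd E S₁ Y ∩ nbhd E S₂ Y).card : ℝ) - q ^ 2 * Y.card|)
      ≤ δ * p ^ 2 * ((X.card.choose 2 : ℝ)) ^ 2 * Y.card

/-- The 3-uniform hypergraph with edge set `E` satisfies `TUPLE(δ, q)`. -/
def TupleP {V : Type*} [Fintype V] [DecidableEq V] (E : Finset (Finset V))
    (δ q : ℝ) : Prop :=
  (((pairsOf (Finset.univ : Finset V)).filter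
      (fun S => ¬ |((nbhd E S Finset.univ).card : ℝ) - (Fintype.card V : ℝ) * q|
          < δ * (Fintype.card V : ℝ) * q)).card : ℝ)
      ≤ δ * ((Fintype.card V).choose 2 : ℝ) ∧
  ((((pairsOf (Finset.univ : Finset V)).powersetCard 2).filter
      (fun P => ¬ ∀ S₁ ∈ P, ∀ S₂ ∈ P, S₁ ≠ S₂ →
        |((nbhd E S₁ Finset.univ ∩ nbhd E S₂ Finset.univ).card : ℝ)
            - (Fintype.card V : ℝ) * q ^ 2|
          < δ * (Fintype.card V : ℝ) * q ^ 2)).card : ℝ)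
      ≤ δ * ((((Fintype.card V).choose 2).choose 2 : ℕ) : ℝ)

/-!
Large sets are controlled directly by `Q'`. The discrepancy `D(X', Y') = e(X', Y') - q|X'||Y'|`
is additive in each argument, so a set `A` leaving room for a large set `Z` in its complement
satisfies `D(A) = D(A ∪ Z) - D(Z)`, and an arbitrary set is a union of boundedly many such sets
(their number depends only on `η`). This controls every `D(X', Y')` by `O_η(δ q n³)`, which is at
most `ε' p binom(|X|, 2) |Y|` once `δ` is small in terms of `ε'`, `η`, `σ`. Boundedly small vertex
sets cannot occur: a pair `S` and a vertex `y ∈ S` never span an edge, so jumbledness gives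
`p ≤ β ≤ γ p n^{3/2} < p`.
-/

def disc {V : Type*} [DecidableEq V] (E : Finset (Finset V)) (q : ℝ)
    (X : Finset (Finset V)) (Y : Finset V) : ℝ :=
  eHG E X Y - q * #X * #Y

section AdditiveSetFunction

variable {α : Type*} [DecidableEq α] {f : Finset α → ℝ}

lemma abs_le_two_mul_of_card_add_le
    (hf : ∀ A B, Disjoint A B → f (A ∪ B) = f A + f B) {U : Finset α} {m : ℕ} {B : ℝ}
    (hbig : ∀ A ⊆ U, m ≤ #A → |f A| ≤ B) {A : Finset α} (hA : A ⊆ U) (hAm : #A + m ≤ #U) :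
    |f A| ≤ 2 * B := by
  obtain ⟨Z, hZU, hZ⟩ := exists_subset_card_eq (s := U \ A) (n := m)
    (by rw [card_sdiff_of_subset hA]; omega)
  have hdisj : Disjoint A Z := disjoint_of_subset_right hZU disjoint_sdiff
  have hZ' : Z ⊆ U := hZU.trans sdiff_subset
  have hAZ := hbig (A ∪ Z) (union_subset hA hZ')
    (by rw [card_union_of_disjoint hdisj]; omega)
  have hZB := hbig Z hZ' hZ.ge
  rw [hf A Z hdisj] at hAZ
  calc |f A| = |(f A + f Z) - f Z| := by ring_nf
    _ ≤ |f A + f Z| + |f Z| := abs_sub _ _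
    _ ≤ 2 * B := by linarith

lemma abs_le_mul_of_card_le_mul
    (hf : ∀ A B, Disjoint A B → f (A ∪ B) = f A + f B) {U : Finset α} {m : ℕ} {B : ℝ}
    (hm : m ≤ #U) (hbig : ∀ A ⊆ U, m ≤ #A → |f A| ≤ B) (j : ℕ) :
    ∀ A ⊆ U, #A ≤ j * (#U - m) → |f A| ≤ j * (2 * B) := by
  induction j with
  | zero =>
    intro A _ hA
    have hempty : f ∅ = 0 := by
      have := hf ∅ ∅ (disjoint_empty_left ∅)
      rw [empty_union] at this
      linarith
    simp [card_eq_zero.mp (by simpa using hA), hempty]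
  | succ j ih =>
    intro A hAU hA
    obtain ⟨A₁, hA₁A, hA₁⟩ := exists_subset_card_eq (min_le_left #A (#U - m))
    have hdisj : Disjoint A₁ (A \ A₁) := disjoint_sdiff
    have hA₁B := abs_le_two_mul_of_card_add_le hf hbig (hA₁A.trans hAU) (by omega)
    have hrest := ih (A \ A₁) (sdiff_subset.trans hAU) (by
      rw [card_sdiff_of_subset hA₁A, hA₁, Nat.add_mul] at *; omega)
    rw [← union_sdiff_of_subset hA₁A, hf _ _ hdisj]
    calc |f A₁ + f (A \ A₁)| ≤ |f A₁| + |f (A \ A₁)| := abs_add_le _ _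
      _ ≤ ((j + 1 : ℕ) : ℝ) * (2 * B) := by push_cast; linarith

lemma abs_le_of_abs_le_of_proportion_le
    (hf : ∀ A B, Disjoint A B → f (A ∪ B) = f A + f B) {U : Finset α} {η B : ℝ} {j : ℕ}
    (hη : 0 ≤ η) (hj : 2 ≤ j * (1 - η)) (hjU : j ≤ #U)
    (hbig : ∀ A ⊆ U, η * #U ≤ #A → |f A| ≤ B) {A : Finset α} (hA : A ⊆ U) :
    |f A| ≤ j * (2 * B) := by
  set m := ⌈η * #U⌉₊
  have hη1 : η ≤ 1 := by nlinarith [(Nat.cast_nonneg j : (0 : ℝ) ≤ j)]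
  have hm : m ≤ #U := Nat.ceil_le.mpr (by nlinarith [(Nat.cast_nonneg #U : (0 : ℝ) ≤ #U)])
  have hm_lt : (m : ℝ) < η * #U + 1 := Nat.ceil_lt_add_one (by positivity)
  have hjU' : (j : ℝ) ≤ #U := by exact_mod_cast hjU
  have hcover : #A ≤ j * (#U - m) := by
    have : (#A : ℝ) ≤ #U := by exact_mod_cast card_le_card hA
    have : (#A : ℝ) ≤ ((j * (#U - m) : ℕ) : ℝ) := by
      rw [Nat.cast_mul, Nat.cast_sub hm]; nlinarith
    exact_mod_cast this
  exact abs_le_mul_of_card_le_mul hf hm (fun A hA hmA => hbig A hA (Nat.ceil_le.mp hmA)) j A hA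
    hcover

end AdditiveSetFunction

section Hypergraph

variable {V : Type*} [DecidableEq V] (E : Finset (Finset V))

lemma eHG_union_left {X₁ X₂ : Finset (Finset V)} (h : Disjoint X₁ X₂) (Y : Finset V) :
    eHG E (X₁ ∪ X₂) Y = eHG E X₁ Y + eHG E X₂ Y := by
  rw [eHG, union_product, filter_union, card_union_of_disjoint]
  · rfl
  exact disjoint_filter_filter (disjoint_product.mpr (Or.inl h))

lemma eHG_union_right (X : Finset (Finset V)) {Y₁ Y₂ : Finset V} (h : Disjoint Y₁ Y₂) :
    eHG E X (Y₁ ∪ Y₂) = eHG E X Y₁ + eHG E X Y₂ := by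
  rw [eHG, product_union, filter_union, card_union_of_disjoint]
  · rfl
  exact disjoint_filter_filter (disjoint_product.mpr (Or.inr h))

lemma eHG_empty_left (Y : Finset V) : eHG E ∅ Y = 0 := by
  simp [eHG]

lemma disc_union_left (q : ℝ) {X₁ X₂ : Finset (Finset V)} (h : Disjoint X₁ X₂)
    (Y : Finset V) : disc E q (X₁ ∪ X₂) Y = disc E q X₁ Y + disc E q X₂ Y := by
  simp only [disc, eHG_union_left E h, card_union_of_disjoint h]
  push_cast; ring

lemma disc_union_right (q : ℝ) (X : Finset (Finset V)) {Y₁ Y₂ : Finset V}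
    (h : Disjoint Y₁ Y₂) : disc E q X (Y₁ ∪ Y₂) = disc E q X Y₁ + disc E q X Y₂ := by
  simp only [disc, eHG_union_right E X h, card_union_of_disjoint h]
  push_cast; ring

lemma eHG_singleton_self_eq_zero {S : Finset V} (hS : S.card = 2) (hE : Uniform3 E) {y : V}
    (hy : y ∈ S) : eHG E {S} {y} = 0 := by
  have hSE : insert y S ∉ E := fun h => by
    have := hE _ h
    rw [insert_eq_of_mem hy] at this
    omega
  simp [eHG, hSE]

lemma Jumbled.abs_le (hE : Uniform3 E) {p β : ℝ} (hJ : Jumbled E p β) {S : Finset V}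
    (hS : S.card = 2) : |p| ≤ β := by
  obtain ⟨y, hy⟩ := card_pos.mp (by omega : 0 < S.card)
  have := hJ {S} (by simpa using hS) {y}
  simpa [eHG_singleton_self_eq_zero E hS hE hy] using this

lemma card_eq_two_of_subset_pairsOf {X : Finset (Finset V)} {W : Finset V}
    (hX : X ⊆ pairsOf W) : ∀ S ∈ X, S.card = 2 :=
  fun _ hS => (mem_powersetCard.mp (hX hS)).2

end Hypergraph

section PropQ'

variable {V : Type*} [Fintype V] [DecidableEq V] {E : Finset (Finset V)} {η δ q : ℝ}

lemma card_pairsOf_univ : #(pairsOf (univ : Finset V)) = (Fintype.card V).choose 2 := by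
  rw [pairsOf, card_powersetCard, card_univ]

lemma PropQ'.abs_disc_le (hQ : PropQ' E η δ q) (hq : 0 ≤ q) (hδ : 0 ≤ δ)
    {X : Finset (Finset V)} (hX : X ⊆ pairsOf univ) {Y : Finset V}
    (hXη : η * (Fintype.card V).choose 2 ≤ #X) (hYη : η * Fintype.card V ≤ #Y) :
    |disc E q X Y| ≤ δ * q * (Fintype.card V).choose 2 * Fintype.card V := by
  obtain ⟨hlo, hhi⟩ := hQ X (card_eq_two_of_subset_pairsOf hX) Y hXη hYη
  have hXC : (#X : ℝ) ≤ (Fintype.card V).choose 2 := by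
    exact_mod_cast card_pairsOf_univ (V := V) ▸ card_le_card hX
  have hYn : (#Y : ℝ) ≤ Fintype.card V := by exact_mod_cast card_le_univ Y
  calc |disc E q X Y| ≤ δ * q * #X * #Y := by
        rw [disc, abs_le]; constructor <;> linarith
    _ ≤ δ * q * (Fintype.card V).choose 2 * Fintype.card V := by gcongr

lemma PropQ'.abs_disc_le_of_subset (hQ : PropQ' E η δ q) (hq : 0 ≤ q) (hδ : 0 ≤ δ)
    (hη : 0 ≤ η) {j : ℕ} (hj : 2 ≤ j * (1 - η)) (hjn : j ≤ Fintype.card V)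
    (hjC : j ≤ (Fintype.card V).choose 2) {X : Finset (Finset V)} (hX : X ⊆ pairsOf univ)
    (Y : Finset V) :
    |disc E q X Y| ≤ 4 * j ^ 2 * δ * q * (Fintype.card V).choose 2 * Fintype.card V := by
  have hlargeX : ∀ X ⊆ pairsOf univ, η * #(pairsOf (univ : Finset V)) ≤ #X → ∀ Y,
      |disc E q X Y| ≤ j * (2 * (δ * q * (Fintype.card V).choose 2 * Fintype.card V)) := by
    intro X₁ hX₁ hX₁η Y₁
    rw [card_pairsOf_univ] at hX₁η
    exact abs_le_of_abs_le_of_proportion_le (fun _ _ h => disc_union_right E q X₁ h) hη hj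
      (by rwa [card_univ])
      (fun Y₂ _ hY₂η => hQ.abs_disc_le hq hδ hX₁ hX₁η (by rwa [card_univ] at hY₂η))
      (subset_univ Y₁)
  calc |disc E q X Y|
      ≤ j * (2 * (j * (2 * (δ * q * (Fintype.card V).choose 2 * Fintype.card V)))) :=
        abs_le_of_abs_le_of_proportion_le (f := fun X => disc E q X Y)
          (fun _ _ h => disc_union_left E q h Y) hη hj (by rwa [card_pairsOf_univ])
          (fun X₁ hX₁ hX₁η => hlargeX X₁ hX₁ hX₁η Y) hX
    _ = 4 * j ^ 2 * δ * q * (Fintype.card V).choose 2 * Fintype.card V := by ring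

end PropQ'

lemma cast_choose_two_le (n : ℕ) : (n.choose 2 : ℝ) ≤ n ^ 2 / 2 := by
  rw [Nat.cast_choose_two]; nlinarith [(Nat.cast_nonneg n : (0 : ℝ) ≤ n)]

lemma sq_div_four_le_cast_choose_two {n : ℕ} (hn : 2 ≤ n) : (n : ℝ) ^ 2 / 4 ≤ n.choose 2 := by
  have : (2 : ℝ) ≤ n := by exact_mod_cast hn
  rw [Nat.cast_choose_two]; nlinarith

lemma Jumbled.le_card {V : Type*} [Fintype V] [DecidableEq V] {E : Finset (Finset V)}
    (hE : Uniform3 E) {p β : ℝ} (hJ : Jumbled E p β) (hp : 0 < p) {m : ℕ}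
    (hβ : β ≤ (2 * (m : ℝ) ^ ((3 : ℝ) / 2))⁻¹ * p * (Fintype.card V : ℝ) ^ ((3 : ℝ) / 2))
    {S : Finset V} (hS : S.card = 2) : m ≤ Fintype.card V := by
  by_contra! hm
  have hpβ : p ≤ β := (le_abs_self p).trans (hJ.abs_le E hE hS)
  have hm0 : 0 < (m : ℝ) ^ ((3 : ℝ) / 2) := by
    have : 0 < m := (Nat.zero_le _).trans_lt hm
    positivity
  have : (2 * (m : ℝ) ^ ((3 : ℝ) / 2))⁻¹ * p * (Fintype.card V : ℝ) ^ ((3 : ℝ) / 2) ≤ p / 2 :=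
    calc _ ≤ (2 * (m : ℝ) ^ ((3 : ℝ) / 2))⁻¹ * p * (m : ℝ) ^ ((3 : ℝ) / 2) := by
          gcongr
      _ = p / 2 := by field_simp
  linarith

lemma self_le_choose_two {n : ℕ} (hn : 3 ≤ n) : n ≤ n.choose 2 := by
  have : (3 : ℝ) ≤ n := by exact_mod_cast hn
  have : (n : ℝ) ≤ n.choose 2 := by rw [Nat.cast_choose_two]; nlinarith
  exact_mod_cast this

theorem stmt5 :
    ∀ ε' η σ : ℝ, 0 < ε' → ε' < 1 → 0 < η → η < 1 → 0 < σ → σ < 1 →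
    ∃ δ : ℝ, 0 < δ ∧
      ∀ α : ℝ, 0 < α →
      ∃ γ : ℝ, 0 < γ ∧
        ∀ (V : Type) [Fintype V] [DecidableEq V],
        ∀ (EΓ EG : Finset (Finset V)) (p q β : ℝ),
          0 < p → p ≤ 1 → α * p ≤ q → q ≤ p →
          β ≤ γ * p * (Fintype.card V : ℝ) ^ ((3 : ℝ) / 2) →
          Uniform3 EΓ → Jumbled EΓ p β → EG ⊆ EΓ →
          PropQ' EG η δ q →
          ∀ X Y : Finset V,
            σ * (Fintype.card V : ℝ) ≤ X.card → σ * (Fintype.card V : ℝ) ≤ Y.card →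
            DiscH EG X Y q p ε' := by
  intro ε' η σ hε' _ hη hη1 hσ _
  set j := ⌈2 / (1 - η)⌉₊
  have hj : 2 ≤ j * (1 - η) := (div_le_iff₀ (by linarith)).mp (Nat.le_ceil _)
  have hj3 : 3 ≤ j := by
    have : (2 : ℝ) < j := (lt_div_iff₀ (by linarith)).mpr (by linarith) |>.trans_le (Nat.le_ceil _)
    exact_mod_cast this
  refine ⟨ε' * σ ^ 3 / (8 * j ^ 2), by positivity, fun α hα =>
    ⟨(2 * (j : ℝ) ^ ((3 : ℝ) / 2))⁻¹, by positivity, ?_⟩⟩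
  intro V _ _ EΓ EG p q β hp _ hαq hqp hβ hU hJ _ hQ X Y hX hY X' hX' Y' _
  have hq : 0 < q := (mul_pos hα hp).trans_le hαq
  obtain hX2 | hX2 := lt_or_ge #X 2
  · rw [pairsOf, powersetCard_eq_empty.mpr hX2, subset_empty] at hX'
    subst hX'
    simp only [eHG_empty_left, card_empty, CharP.cast_eq_zero, mul_zero, zero_mul, sub_zero,
      abs_zero]
    positivity
  obtain ⟨S, -, hS⟩ := exists_subset_card_eq hX2
  have hjn : j ≤ Fintype.card V := hJ.le_card hU hp hβ hS
  have hdisc := hQ.abs_disc_le_of_subset hq.le (by positivity) hη.le hj hjn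
    (hjn.trans (self_le_choose_two (hj3.trans hjn)))
    (hX'.trans (powersetCard_mono (subset_univ X))) Y'
  have hC := cast_choose_two_le (Fintype.card V)
  have hXC := sq_div_four_le_cast_choose_two hX2
  refine hdisc.trans ?_
  calc 4 * j ^ 2 * (ε' * σ ^ 3 / (8 * j ^ 2)) * q * (Fintype.card V).choose 2 * Fintype.card V
      = ε' / 2 * σ ^ 3 * q * (Fintype.card V).choose 2 * Fintype.card V := by
        field_simp; ring
    _ ≤ ε' / 2 * σ ^ 3 * p * (Fintype.card V ^ 2 / 2) * Fintype.card V := by gcongr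
    _ = ε' * p * ((σ * Fintype.card V) ^ 2 / 4) * (σ * Fintype.card V) := by ring
    _ ≤ ε' * p * (#X ^ 2 / 4) * #Y := by gcongr
    _ ≤ ε' * p * ((#X).choose 2) * #Y := by gcongr
end

section
/- Let Γ be an n-vertex 3-uniform (p,β)-jumbled hypergraph with vertex set V, and let X, Y ⊆ V. Let B₁ = {(S₁,S₂) ∈ binom(X,2) × binom(X,2) : |N_Γ(S₁) ∩ Y| > 2p|Y|}. Then |B₁| ≤ (β²/(p²|Y|))·binom(|X|,2). -/
/-! The condition defining `B₁` only involves the first pair, so `B₁ = A × binom(X,2)` with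
`A` the set of pairs of `X` whose neighbourhood in `Y` exceeds `2p|Y|`. Counting incidences,
`e(A,Y) > 2p|A||Y|`, while jumbledness gives `e(A,Y) ≤ p|A||Y| + β√(|A||Y|)`; hence
`p√(|A||Y|) < β`, i.e. `|A| < β²/(p²|Y|)`. -/

open Finset
open scoped Classical

lemma sq_mul_lt_sq_of_mul_lt_mul_sqrt {q x β : ℝ} (hq : 0 < q) (hx : 0 < x)
    (h : q * x < β * Real.sqrt x) : q ^ 2 * x < β ^ 2 := by
  have hs : 0 < Real.sqrt x := Real.sqrt_pos.mpr hx
  have hsq : Real.sqrt x ^ 2 = x := Real.sq_sqrt hx.le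
  have hqs : q * Real.sqrt x < β := by
    have h' : q * Real.sqrt x * Real.sqrt x < β * Real.sqrt x := by
      rwa [mul_assoc, ← sq, hsq]
    exact lt_of_mul_lt_mul_right h' hs.le
  calc q ^ 2 * x = (q * Real.sqrt x) ^ 2 := by rw [mul_pow, hsq]
    _ < β ^ 2 := pow_lt_pow_left₀ hqs (by positivity) two_ne_zero

section

variable {V : Type*} [DecidableEq V]

lemma eHG_eq_sum_card_nbhd (E A : Finset (Finset V)) (Y : Finset V) :
    eHG E A Y = ∑ S ∈ A, (nbhd E S Y).card := by
  simp only [eHG, nbhd, card_filter, sum_product]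

lemma card_le_of_jumbled_of_lt_card_nbhd {E : Finset (Finset V)} {p β q : ℝ}
    (hj : Jumbled E p β) (hq : 0 < q) {A : Finset (Finset V)} (hA : ∀ S ∈ A, S.card = 2)
    {Y : Finset V} (hlarge : ∀ S ∈ A, (p + q) * Y.card < ((nbhd E S Y).card : ℝ)) :
    (A.card : ℝ) ≤ β ^ 2 / (q ^ 2 * Y.card) := by
  obtain rfl | hne := A.eq_empty_or_nonempty
  · simp only [card_empty, Nat.cast_zero]
    positivity
  obtain ⟨S₀, hS₀⟩ := hne
  have hY : 0 < #Y := by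
    refine Nat.pos_of_ne_zero fun hY0 => ?_
    have hN : #(nbhd E S₀ Y) = 0 :=
      Nat.eq_zero_of_le_zero (hY0 ▸ card_le_card (filter_subset _ _))
    simpa [hY0, hN] using hlarge S₀ hS₀
  have hApos : (0 : ℝ) < A.card := by exact_mod_cast card_pos.mpr ⟨S₀, hS₀⟩
  have hlower : (A.card : ℝ) * ((p + q) * Y.card) < eHG E A Y := by
    have := sum_lt_sum_of_nonempty ⟨S₀, hS₀⟩ hlarge
    rwa [sum_const, nsmul_eq_mul, ← Nat.cast_sum, ← eHG_eq_sum_card_nbhd] at this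
  have hupper := (abs_le.mp (hj A hA Y)).2
  have hkey : q ^ 2 * (A.card * Y.card) < β ^ 2 :=
    sq_mul_lt_sq_of_mul_lt_mul_sqrt hq (by positivity) (by linarith)
  rw [le_div_iff₀ (by positivity)]
  linarith

end

theorem stmt11_general {V : Type*} [DecidableEq V]
    (EΓ : Finset (Finset V)) (p β : ℝ) (hp : 0 < p)
    (hj : Jumbled EΓ p β) (X Y : Finset V) :
    (((pairsOf X ×ˢ pairsOf X).filter
        (fun z => 2 * p * Y.card < ((nbhd EΓ z.1 Y).card : ℝ))).card : ℝ)
      ≤ β ^ 2 / (p ^ 2 * Y.card) * ((X.card.choose 2 : ℕ) : ℝ) := by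
  set A := (pairsOf X).filter (fun S => 2 * p * Y.card < ((nbhd EΓ S Y).card : ℝ))
  have hA : ∀ S ∈ A, S.card = 2 := fun S hS => (mem_powersetCard.mp (mem_filter.mp hS).1).2
  have hlarge : ∀ S ∈ A, (p + p) * Y.card < ((nbhd EΓ S Y).card : ℝ) := fun S hS => by
    rw [← two_mul]; exact (mem_filter.mp hS).2
  rw [filter_product_left (fun S => 2 * p * Y.card < ((nbhd EΓ S Y).card : ℝ)), card_product,
    pairsOf, card_powersetCard, Nat.cast_mul]
  exact mul_le_mul_of_nonneg_right (card_le_of_jumbled_of_lt_card_nbhd hj hp hA hlarge)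
    (Nat.cast_nonneg _)

theorem stmt11 {V : Type*} [Fintype V] [DecidableEq V]
    (EΓ : Finset (Finset V)) (p β : ℝ) (hp : 0 < p)
    (h3 : Uniform3 EΓ) (hj : Jumbled EΓ p β) (X Y : Finset V) :
    (((pairsOf X ×ˢ pairsOf X).filter
        (fun z => 2 * p * Y.card < ((nbhd EΓ z.1 Y).card : ℝ))).card : ℝ)
      ≤ β ^ 2 / (p ^ 2 * Y.card) * ((X.card.choose 2 : ℕ) : ℝ) :=
  stmt11_general EΓ p β hp hj X Y
end
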